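/- Let n ≥ 1 and 1 ≤ d ≤ n be integers, let x ∈ ℝ^n, r > 0, let A ⊆ U(x,r) be a convex set, and let P be a d-dimensional affine plane of ℝ^n passing through x. Suppose 0 < ε < 1/2, 0 < δ < 1/2, and A ⊆ (P + B̄(0, εr)) ∩ B̄(x, (1−δ)r). Then there exists a Lipschitz map φ: ℝ^n → ℝ^n such that φ(y) = y for every y ∈ ℝ^n ∖ U(x,r), φ(z) = P_♮(z) for every z ∈ A, φ(U(x,r)) ⊆ U(x,r), and φ is (3 + ε/δ)-Lipschitz. -/

import Mathlib

open MeasureTheory Metric Set Filter Topology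
open scoped ENNReal NNReal

noncomputable section

/-- Euclidean space `ℝ^n`. -/
abbrev Euc (n : ℕ) := EuclideanSpace ℝ (Fin n)

/-- A deformation on `ℝⁿ` in the open set `U`: a Lipschitz map `φ : ℝⁿ → ℝⁿ` homotopic to the
identity such that the closure of `W_φ = {x | φ x ≠ x}` is compact and contained in `U`. -/
def IsDeformation (n : ℕ) (U : Set (Euc n)) (φ : Euc n → Euc n) : Prop :=
  (∃ K : ℝ≥0, LipschitzWith K φ) ∧
  (∃ hc : Continuous φ, (ContinuousMap.id (Euc n)).Homotopic ⟨φ, hc⟩) ∧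
  IsCompact (closure {x | φ x ≠ x}) ∧
  closure {x | φ x ≠ x} ⊆ U

/-- Membership in the class `QM(ℝⁿ, U, M, ε)`: `H^d`-restriction to `E` is locally finite,
`E ∩ U` is relatively closed in `U`, and for every deformation `φ` on `ℝⁿ` in `U` one has
`H^d(E ∩ W_φ) ≤ M(r) · H^d(φ(E ∩ W_φ)) + ε(r)` with `r = diam (W_φ ∪ φ(W_φ))`. -/
def MemQM (n : ℕ) (d : ℕ) (U : Set (Euc n)) (M ε : ℝ → ℝ≥0∞) (E : Set (Euc n)) : Prop :=
  IsLocallyFiniteMeasure ((μH[(d : ℝ)] : Measure (Euc n)).restrict E) ∧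
  (∃ F : Set (Euc n), IsClosed F ∧ E ∩ U = F ∩ U) ∧
  ∀ φ : Euc n → Euc n, IsDeformation n U φ →
    μH[(d : ℝ)] (E ∩ {x | φ x ≠ x}) ≤
      M (diam ({x | φ x ≠ x} ∪ φ '' {x | φ x ≠ x})) *
        μH[(d : ℝ)] (φ '' (E ∩ {x | φ x ≠ x})) +
      ε (diam ({x | φ x ≠ x} ∪ φ '' {x | φ x ≠ x}))

/-- Weak convergence of Radon measures: testing against continuous compactly supported
functions. -/
def WeakConv (n : ℕ) (μs : ℕ → Measure (Euc n)) (μ : Measure (Euc n)) : Prop :=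
  ∀ f : Euc n → ℝ, Continuous f → HasCompactSupport f →
    Tendsto (fun k => ∫ x, f x ∂(μs k)) atTop (𝓝 (∫ x, f x ∂μ))

/-- The support `spt μ` of a measure: points all of whose neighborhoods have positive measure. -/
def msupport (n : ℕ) (μ : Measure (Euc n)) : Set (Euc n) :=
  {x | ∀ r : ℝ, 0 < r → 0 < μ (ball x r)}

/-- `ω_d`: the Lebesgue measure of the unit ball of `ℝ^d`. -/
def ωb (d : ℕ) : ℝ≥0∞ := volume (ball (0 : Euc d) 1)

/-- Upper `d`-density `Θ^{*d}(μ,x) = limsup_{r→0+} μ(B̄(x,r))/(ω_d r^d)`. -/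
def upperDensity (n : ℕ) (d : ℕ) (μ : Measure (Euc n)) (x : Euc n) : ℝ≥0∞ :=
  limsup (fun r : ℝ => μ (closedBall x r) / (ωb d * ENNReal.ofReal r ^ d)) (𝓝[>] (0 : ℝ))

/-- Lower `d`-density `Θ_*^d(μ,x) = liminf_{r→0+} μ(B̄(x,r))/(ω_d r^d)`. -/
def lowerDensity (n : ℕ) (d : ℕ) (μ : Measure (Euc n)) (x : Euc n) : ℝ≥0∞ :=
  liminf (fun r : ℝ => μ (closedBall x r) / (ωb d * ENNReal.ofReal r ^ d)) (𝓝[>] (0 : ℝ))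

/-- `limsup_{k→∞}` of a sequence of real-valued gauge functions, with values in `[0,∞]`. -/
def limsupFn (Ms : ℕ → ℝ → ℝ) : ℝ → ℝ≥0∞ :=
  fun r => Filter.limsup (fun k => ENNReal.ofReal (Ms k r)) atTop

/-- Right limit at `0` of a nondecreasing function `[0,∞) → [0,∞]`, i.e. `M(0+)`. -/
def rightLim0 (M : ℝ → ℝ≥0∞) : ℝ≥0∞ := ⨅ r ∈ Set.Ioi (0 : ℝ), M r

/-! The map is `φ y = y - a(y) • w(y)`, where `w(y)` is the component of `y - x` orthogonal to
the plane, radially truncated at length `εr`, and `a` is a cutoff equal to `1` on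
`B̄(x, (1-δ)r)`, to `0` off `U(x,r)`, and `1/(δr)`-Lipschitz. On `A` the truncation and the
cutoff are inactive, so `φ = P_♮` there. The truncation is `2`-Lipschitz and bounded by `εr`,
which with the product rule gives the constant `1 + 2 + εr/(δr)`. Since `φ y - x` is obtained
from `y - x` by shrinking its orthogonal component by a factor in `[0,1]`, `φ` does not increase
the distance to `x`, hence preserves `U(x,r)`. -/

section RadialRetraction

variable {E : Type*} [NormedAddCommGroup E] {c : ℝ}

/-- The radial retraction of `E` onto `closedBall 0 c`; the junk value `c / 0 = 0` is harmless
since it only multiplies `v = 0`. -/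
def radialRetraction [NormedSpace ℝ E] (c : ℝ) (v : E) : E := min 1 (c / ‖v‖) • v

lemma radialRetraction_coeff_mem_Icc (hc : 0 ≤ c) (v : E) :
    min 1 (c / ‖v‖) ∈ Icc (0 : ℝ) 1 :=
  ⟨le_min zero_le_one (by positivity), min_le_left _ _⟩

variable [NormedSpace ℝ E]

lemma norm_radialRetraction (hc : 0 ≤ c) (v : E) :
    ‖radialRetraction c v‖ = min ‖v‖ c := by
  rcases eq_or_ne v 0 with rfl | hv
  · simp [radialRetraction, hc]
  rw [radialRetraction, norm_smul, Real.norm_eq_abs,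
    abs_of_nonneg (radialRetraction_coeff_mem_Icc hc v).1, min_mul_of_nonneg _ _ (norm_nonneg v),
    one_mul, div_mul_cancel₀ _ (norm_ne_zero_iff.2 hv)]

lemma radialRetraction_of_norm_le {v : E} (h : ‖v‖ ≤ c) : radialRetraction c v = v := by
  rcases eq_or_ne v 0 with rfl | hv
  · simp [radialRetraction]
  rw [radialRetraction, min_eq_left ((one_le_div (norm_pos_iff.2 hv)).2 h), one_smul]

lemma norm_radialRetraction_sub_le (hc : 0 ≤ c) (a b : E) :
    ‖radialRetraction c a - radialRetraction c b‖ ≤ 2 * ‖a - b‖ := by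
  wlog hab : ‖a‖ ≤ ‖b‖ generalizing a b
  · rw [norm_sub_rev, norm_sub_rev a]
    exact this b a (le_of_not_ge hab)
  set sa := min 1 (c / ‖a‖)
  set sb := min 1 (c / ‖b‖)
  obtain ⟨hsb0, hsb1⟩ := radialRetraction_coeff_mem_Icc hc b
  have hsa : sa * ‖a‖ = min ‖a‖ c := by
    rw [← norm_radialRetraction hc a, radialRetraction, norm_smul, Real.norm_eq_abs,
      abs_of_nonneg (radialRetraction_coeff_mem_Icc hc a).1]
  have hsb : sb * ‖b‖ = min ‖b‖ c := by
    rw [← norm_radialRetraction hc b, radialRetraction, norm_smul, Real.norm_eq_abs,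
      abs_of_nonneg hsb0]
  have hgap : ‖b‖ - ‖a‖ ≤ ‖a - b‖ := by
    rw [norm_sub_rev]
    exact norm_sub_norm_le b a
  have hmin : min ‖b‖ c - min ‖a‖ c ≤ ‖b‖ - ‖a‖ := by
    have := abs_min_sub_min_le_max ‖b‖ c ‖a‖ c
    simp only [sub_self, abs_zero, abs_of_nonneg (sub_nonneg.2 hab)] at this
    exact (le_abs_self _).trans (this.trans (max_le le_rfl (sub_nonneg.2 hab)))
  -- `(sa - sb) ‖a‖ = (min ‖a‖ c - min ‖b‖ c) + sb (‖b‖ - ‖a‖)`: terms of opposite signs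
  have hcoeff : |sa - sb| * ‖a‖ ≤ ‖a - b‖ := by
    have h0 : 0 ≤ sb * (‖b‖ - ‖a‖) := mul_nonneg hsb0 (sub_nonneg.2 hab)
    have h1 : sb * (‖b‖ - ‖a‖) ≤ ‖b‖ - ‖a‖ :=
      mul_le_of_le_one_left (sub_nonneg.2 hab) hsb1
    rw [← abs_of_nonneg (norm_nonneg a), ← abs_mul, abs_le]
    constructor <;>
      nlinarith [min_le_min_right c hab]
  calc ‖sa • a - sb • b‖ = ‖sb • (a - b) + (sa - sb) • a‖ := by congr 1; module
    _ ≤ sb * ‖a - b‖ + |sa - sb| * ‖a‖ := by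
      refine (norm_add_le _ _).trans_eq ?_
      rw [norm_smul, norm_smul, Real.norm_eq_abs, Real.norm_eq_abs, abs_of_nonneg hsb0]
    _ ≤ 2 * ‖a - b‖ := by nlinarith [norm_nonneg (a - b)]

end RadialRetraction

section RadialCutoff

variable {X : Type*} [PseudoMetricSpace X] {x y z : X} {r ρ : ℝ}

def radialCutoff (x : X) (r ρ : ℝ) (y : X) : ℝ :=
  projIcc (0 : ℝ) 1 zero_le_one ((r - dist y x) / ρ)

lemma radialCutoff_mem_Icc : radialCutoff x r ρ y ∈ Icc (0 : ℝ) 1 :=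
  Subtype.prop _

lemma radialCutoff_of_le_dist (hρ : 0 ≤ ρ) (hy : r ≤ dist y x) :
    radialCutoff x r ρ y = 0 := by
  rw [radialCutoff, projIcc_of_le_left _ (div_nonpos_of_nonpos_of_nonneg (by linarith) hρ)]

lemma radialCutoff_of_dist_le (hρ : 0 < ρ) (hy : dist y x ≤ r - ρ) :
    radialCutoff x r ρ y = 1 := by
  rw [radialCutoff, projIcc_of_right_le _ ((le_div_iff₀ hρ).2 (by linarith))]

lemma abs_radialCutoff_sub_le (hρ : 0 ≤ ρ) (y z : X) :
    |radialCutoff x r ρ y - radialCutoff x r ρ z| ≤ dist y z / ρ :=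
  calc |radialCutoff x r ρ y - radialCutoff x r ρ z|
      ≤ |(r - dist y x) / ρ - (r - dist z x) / ρ| := abs_projIcc_sub_projIcc _
    _ = |dist z x - dist y x| / ρ := by rw [← sub_div, abs_div, abs_of_nonneg hρ]; ring_nf
    _ ≤ dist y z / ρ := by gcongr; rw [dist_comm y z]; exact abs_dist_sub_le z y x

end RadialCutoff

lemma norm_smul_sub_smul_le {E : Type*} [SeminormedAddCommGroup E] [NormedSpace ℝ E]
    (a b : ℝ) (v w : E) : ‖a • v - b • w‖ ≤ |a| * ‖v - w‖ + |a - b| * ‖w‖ :=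
  calc ‖a • v - b • w‖ = ‖a • (v - w) + (a - b) • w‖ := by congr 1; module
    _ ≤ |a| * ‖v - w‖ + |a - b| * ‖w‖ := by
      refine (norm_add_le _ _).trans_eq ?_
      rw [norm_smul, norm_smul, Real.norm_eq_abs, Real.norm_eq_abs]

lemma norm_sub_smul_le_of_norm_sub_le {E : Type*} [SeminormedAddCommGroup E] [NormedSpace ℝ E]
    {v w : E} {s : ℝ} (hs : s ∈ Icc (0 : ℝ) 1) (h : ‖v - w‖ ≤ ‖v‖) : ‖v - s • w‖ ≤ ‖v‖ :=
  calc ‖v - s • w‖ = ‖(1 - s) • v + s • (v - w)‖ := by congr 1; module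
    _ ≤ (1 - s) * ‖v‖ + s * ‖v - w‖ := by
      refine (norm_add_le _ _).trans_eq ?_
      rw [norm_smul, norm_smul, Real.norm_eq_abs, Real.norm_eq_abs, abs_of_nonneg hs.1,
        abs_of_nonneg (sub_nonneg.2 hs.2)]
    _ ≤ ‖v‖ := by nlinarith [hs.1]

section PlaneDeformation

variable {E : Type*} [NormedAddCommGroup E] [InnerProductSpace ℝ E]
  (K : Submodule ℝ E) [K.HasOrthogonalProjection] {x y : E} {r ρ c : ℝ}

lemma norm_starProjection_orthogonal_eq_infDist (v : E) :
    ‖Kᗮ.starProjection v‖ = infDist v K := by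
  rw [Submodule.starProjection_orthogonal_val, Submodule.starProjection_minimal,
    infDist_eq_iInf]
  simp only [dist_eq_norm]
  rfl

def planeDeformation (x : E) (r ρ c : ℝ) (y : E) : E :=
  y - radialCutoff x r ρ y • radialRetraction c (Kᗮ.starProjection (y - x))

lemma planeDeformation_of_le_dist (hρ : 0 ≤ ρ) (hy : r ≤ dist y x) :
    planeDeformation K x r ρ c y = y := by
  rw [planeDeformation, radialCutoff_of_le_dist hρ hy, zero_smul, sub_zero]

lemma planeDeformation_eq_starProjection (hρ : 0 < ρ) (hy : dist y x ≤ r - ρ)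
    (hK : infDist (y - x) K ≤ c) :
    planeDeformation K x r ρ c y = x + K.starProjection (y - x) := by
  rw [planeDeformation, radialCutoff_of_dist_le hρ hy, one_smul,
    radialRetraction_of_norm_le ((norm_starProjection_orthogonal_eq_infDist K _).trans_le hK),
    Submodule.starProjection_orthogonal_val]
  abel

lemma dist_planeDeformation_le (hc : 0 ≤ c) :
    dist (planeDeformation K x r ρ c y) x ≤ dist y x := by
  have hw : ‖(y - x) - Kᗮ.starProjection (y - x)‖ ≤ ‖y - x‖ := by
    rw [Submodule.starProjection_orthogonal_val, sub_sub_cancel]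
    exact K.norm_starProjection_apply_le _
  set w := Kᗮ.starProjection (y - x)
  have hs : radialCutoff x r ρ y * min 1 (c / ‖w‖) ∈ Icc (0 : ℝ) 1 := by
    obtain ⟨ha0, ha1⟩ := radialCutoff_mem_Icc (x := x) (r := r) (ρ := ρ) (y := y)
    obtain ⟨ht0, ht1⟩ := radialRetraction_coeff_mem_Icc hc w
    exact ⟨mul_nonneg ha0 ht0, mul_le_one₀ ha1 ht0 ht1⟩
  rw [dist_eq_norm, dist_eq_norm, planeDeformation, radialRetraction, smul_smul,
    sub_right_comm]
  exact norm_sub_smul_le_of_norm_sub_le hs hw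

lemma dist_planeDeformation_planeDeformation_le (hc : 0 ≤ c) (hρ : 0 ≤ ρ) (y z : E) :
    dist (planeDeformation K x r ρ c y) (planeDeformation K x r ρ c z) ≤
      (3 + c / ρ) * dist y z := by
  set w := fun v => radialRetraction c (Kᗮ.starProjection (v - x))
  have hw_lip : ‖w y - w z‖ ≤ 2 * ‖y - z‖ := by
    refine (norm_radialRetraction_sub_le hc _ _).trans ?_
    rw [← map_sub, sub_sub_sub_cancel_right]
    gcongr
    exact Kᗮ.norm_starProjection_apply_le _
  have hw_bound : ‖w z‖ ≤ c := (norm_radialRetraction hc _).trans_le (min_le_right _ _)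
  have ha := abs_radialCutoff_sub_le (x := x) (r := r) hρ y z
  have ha1 : |radialCutoff x r ρ y| ≤ 1 := by
    rw [abs_of_nonneg radialCutoff_mem_Icc.1]
    exact radialCutoff_mem_Icc.2
  simp only [dist_eq_norm] at ha ⊢
  calc ‖planeDeformation K x r ρ c y - planeDeformation K x r ρ c z‖
      = ‖(y - z) - (radialCutoff x r ρ y • w y - radialCutoff x r ρ z • w z)‖ := by
        simp only [planeDeformation, w]; congr 1; abel
    _ ≤ ‖y - z‖ + (1 * (2 * ‖y - z‖) + ‖y - z‖ / ρ * c) := by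
        refine (norm_sub_le _ _).trans (add_le_add_right ?_ _)
        refine (norm_smul_sub_smul_le _ _ _ _).trans ?_
        gcongr
    _ = (3 + c / ρ) * ‖y - z‖ := by ring

end PlaneDeformation

theorem projection_deformation_general
    (n : ℕ)
    (x : Euc n) (r : ℝ) (hr : 0 < r)
    (A : Set (Euc n))
    (T : Submodule ℝ (Euc n))
    (ε δ : ℝ) (hε : 0 < ε) (hδ : 0 < δ)
    (hA : A ⊆ {y : Euc n | infDist (y - x) (T : Set (Euc n)) ≤ ε * r} ∩
      closedBall x ((1 - δ) * r)) :
    ∃ φ : Euc n → Euc n,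
      (∀ y ∉ ball x r, φ y = y) ∧
      (∀ z ∈ A, φ z = x + (T.orthogonalProjection (z - x) : Euc n)) ∧
      φ '' ball x r ⊆ ball x r ∧
      (∀ y z : Euc n, dist (φ y) (φ z) ≤ (3 + ε / δ) * dist y z) := by
  have hεr : 0 ≤ ε * r := by positivity
  have hδr : 0 < δ * r := by positivity
  refine ⟨planeDeformation T x r (δ * r) (ε * r), fun y hy => ?_, fun z hz => ?_, ?_,
    fun y z => ?_⟩
  · exact planeDeformation_of_le_dist T hδr.le (not_lt.1 hy)
  · obtain ⟨hzT, hzx⟩ := hA hz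
    refine planeDeformation_eq_starProjection T hδr ?_ hzT
    linarith [mem_closedBall.1 hzx]
  · rintro _ ⟨y, hy, rfl⟩
    exact (dist_planeDeformation_le T hεr).trans_lt hy
  · simpa only [mul_div_mul_right _ _ hr.ne'] using
      dist_planeDeformation_planeDeformation_le T hεr hδr.le y z

/-- Lemma 6.2 / Lemma 2.5 of [FFL:2019]: if a convex set `A ⊆ U(x,r)` lies
in the `εr`-neighborhood of a `d`-plane `P` through `x` and inside `B̄(x,(1−δ)r)`, there is a
`(3 + ε/δ)`-Lipschitz map `φ` of `ℝⁿ`, equal to the identity outside `U(x,r)`, mapping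
`U(x,r)` into itself, and coinciding with the orthogonal projection `P_♮` on `A`.
Here `P = x + T` with `T` a `d`-dimensional linear subspace. -/
theorem projection_deformation
    (n d : ℕ) (hn : 1 ≤ n) (hd : 1 ≤ d) (hdn : d ≤ n)
    (x : Euc n) (r : ℝ) (hr : 0 < r)
    (A : Set (Euc n)) (hAconv : Convex ℝ A) (hAball : A ⊆ ball x r)
    (T : Submodule ℝ (Euc n)) (hTdim : Module.finrank ℝ T = d)
    (ε δ : ℝ) (hε : 0 < ε) (hε2 : ε < 1 / 2) (hδ : 0 < δ) (hδ2 : δ < 1 / 2)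
    (hA : A ⊆ {y : Euc n | infDist (y - x) (T : Set (Euc n)) ≤ ε * r} ∩
      closedBall x ((1 - δ) * r)) :
    ∃ φ : Euc n → Euc n,
      (∀ y ∉ ball x r, φ y = y) ∧
      (∀ z ∈ A, φ z = x + (T.orthogonalProjection (z - x) : Euc n)) ∧
      φ '' ball x r ⊆ ball x r ∧
      (∀ y z : Euc n, dist (φ y) (φ z) ≤ (3 + ε / δ) * dist y z) :=
  projection_deformation_general n x r hr A T ε δ hε hδ hA
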